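/- Let Δ be an Eulerian triangulation with a rainbow partition of its edges into three colors, and let δ be a separating triangle of Δ (a 3-cycle that is not a face). Then the three edges of δ have three distinct colors. -/

import Mathlib

open Equiv

namespace Orth

/-- The setoid of "being on the same cycle" of a permutation. -/
def cycleSetoid {D : Type*} (f : Equiv.Perm D) : Setoid D :=
  ⟨f.SameCycle,
    ⟨fun x => Equiv.Perm.SameCycle.refl f x, fun h => h.symm, fun h h' => h.trans h'⟩⟩

/-- The number of orbits (cycles, including fixed points) of a permutation. -/
noncomputable def orbCount {D : Type*} (f : Equiv.Perm D) : ℕ :=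
  Nat.card (Quotient (cycleSetoid f))

/-- A plane graph: a finite combinatorial map (darts with vertex-rotation `σ` and
edge-involution `α`) of genus 0, i.e. satisfying Euler's formula `V - E + F = 2`.
Vertices are the orbits of `σ`, edges the orbits of `α`, faces the orbits of `σ * α`. -/
structure PlaneGraph where
  D : Type
  fin : Finite D
  nonempty : Nonempty D
  σ : Equiv.Perm D
  α : Equiv.Perm D
  α_invol : ∀ d, α (α d) = d
  α_ne : ∀ d, α d ≠ d
  sphere : orbCount σ + orbCount (σ * α) = orbCount α + 2

namespace PlaneGraph

variable (M : PlaneGraph)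

/-- Vertices of a plane graph. -/
def Vset : Type := Quotient (cycleSetoid M.σ)

/-- Faces of a plane graph. -/
def Fc : Type := Quotient (cycleSetoid (M.σ * M.α))

/-- Edges of a plane graph. -/
def Eset : Type := Quotient (cycleSetoid M.α)

def vertexOf (d : M.D) : M.Vset := Quotient.mk (cycleSetoid M.σ) d
def faceOf (d : M.D) : M.Fc := Quotient.mk (cycleSetoid (M.σ * M.α)) d
def edgeOf (d : M.D) : M.Eset := Quotient.mk (cycleSetoid M.α) d

/-- Degree of a vertex: the number of darts at it (loops count twice). -/
noncomputable def degree (v : M.Vset) : ℕ := Nat.card {d : M.D // M.vertexOf d = v}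

/-- Length of a face: the number of darts on its boundary walk
(so a bridge on the face is counted twice). -/
noncomputable def faceLen (f : M.Fc) : ℕ := Nat.card {d : M.D // M.faceOf d = f}

/-- Connectivity of the plane graph: any dart is reachable from any other using `σ` and `α`. -/
def Connected : Prop :=
  ∀ d d' : M.D, Relation.ReflTransGen (fun a b => b = M.σ a ∨ b = M.α a) d d'

/-- Bipartiteness: a proper 2-coloring of the vertices. -/
def Bipartite : Prop :=
  ∃ c : M.Vset → Bool, ∀ d : M.D, c (M.vertexOf d) ≠ c (M.vertexOf (M.α d))

/-- Eulerian: connected with all vertex degrees even. -/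
def Eulerian : Prop := M.Connected ∧ ∀ v : M.Vset, Even (M.degree v)

/-- The planar dual: faces become vertices, with one dual edge per primal edge. -/
def dual : PlaneGraph where
  D := M.D
  fin := M.fin
  nonempty := M.nonempty
  σ := M.σ * M.α
  α := M.α
  α_invol := M.α_invol
  α_ne := M.α_ne
  sphere := by
    have h : M.σ * M.α * M.α = M.σ := by
      ext d
      simp [Equiv.Perm.mul_apply, M.α_invol]
    rw [h]
    have := M.sphere
    omega

/-- Vertex `v` lies on face `f`. -/
def vOnFace (v : M.Vset) (f : M.Fc) : Prop := ∃ d, M.vertexOf d = v ∧ M.faceOf d = f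

/-- Edge `e` lies on face `f`. -/
def eOnFace (e : M.Eset) (f : M.Fc) : Prop := ∃ d, M.edgeOf d = e ∧ M.faceOf d = f

/-- Vertex `v` is an endpoint of edge `e`. -/
def vOnEdge (v : M.Vset) (e : M.Eset) : Prop := ∃ d, M.vertexOf d = v ∧ M.edgeOf d = e

/-- Simplicity: no loops and no parallel edges. -/
def Simple : Prop :=
  (∀ d, M.vertexOf (M.α d) ≠ M.vertexOf d) ∧
  ∀ d d' : M.D, M.vertexOf d = M.vertexOf d' → M.vertexOf (M.α d) = M.vertexOf (M.α d') →
    M.edgeOf d = M.edgeOf d'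

/-- The underlying simple graph of a plane graph. -/
def graph : SimpleGraph M.Vset where
  Adj u v := u ≠ v ∧ ∃ d, M.vertexOf d = u ∧ M.vertexOf (M.α d) = v
  symm := by
    constructor
    rintro u v ⟨huv, d, h1, h2⟩
    refine ⟨huv.symm, M.α d, h2, ?_⟩
    rw [show M.α (M.α d) = d from M.α_invol d]
    exact h1
  loopless := by
    constructor
    rintro v ⟨h, -⟩
    exact h rfl

/-- A rainbow partition: each edge gets one of three colors, every face carries all
three colors, around each vertex the colors of consecutive edges alternate between
exactly two colors, and adjacent vertices alternate between different pairs of colors. -/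
structure IsRainbow (col : M.D → Fin 3) : Prop where
  edge_consistent : ∀ d, col (M.α d) = col d
  face_all : ∀ (f : M.Fc) (c : Fin 3), ∃ d, M.faceOf d = f ∧ col d = c
  alt_ne : ∀ d, col (M.σ d) ≠ col d
  alt_per : ∀ d, col (M.σ (M.σ d)) = col d
  adj_pairs : ∀ d, col (M.σ d) ≠ col (M.σ (M.α d))

/-- The monochromatic subgraph of color `x` (as a graph on all vertices). -/
def colorGraph (col : M.D → Fin 3) (x : Fin 3) : SimpleGraph M.Vset where
  Adj u v := u ≠ v ∧ ∃ d, col d = x ∧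
    ((M.vertexOf d = u ∧ M.vertexOf (M.α d) = v) ∨
     (M.vertexOf d = v ∧ M.vertexOf (M.α d) = u))
  symm := by
    constructor
    rintro u v ⟨huv, d, hc, h⟩
    exact ⟨huv.symm, d, hc, h.symm⟩
  loopless := by
    constructor
    rintro v ⟨h, -⟩
    exact h rfl

/-- Vertices incident to an edge of color `x`. -/
def colorSupp (col : M.D → Fin 3) (x : Fin 3) : Set M.Vset :=
  {v | ∃ d, col d = x ∧ M.vertexOf d = v}

end PlaneGraph

/-- 3-connectivity: at least 4 vertices and no cutset of size at most 2. -/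
def ThreeConnected {V : Type*} (G : SimpleGraph V) : Prop :=
  4 ≤ Nat.card V ∧ ∀ s : Set V, s.ncard ≤ 2 → (G.induce sᶜ).Connected

/-- 2-connectivity: at least 3 vertices, connected, and no cut vertex. -/
def TwoConnected {V : Type*} (G : SimpleGraph V) : Prop :=
  3 ≤ Nat.card V ∧ G.Connected ∧ ∀ v : V, (G.induce ({v}ᶜ : Set V)).Connected

end Orth

/-! Around a vertex `v` the edge colors alternate between two colors, so `v` determines a third,
*missing* color `m v`. The color of an edge `uv` is neither `m u` nor `m v`, and `m u ≠ m v` because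
adjacent vertices see different pairs of colors; so the edge color is the third color besides
`m u` and `m v`. On a triangle `uvw` the missing colors are pairwise distinct, so the edges
`uv`, `vw`, `wu` get the three distinct colors `m w`, `m u`, `m v`. -/

theorem Equiv.Perm.SameCycle.apply_eq_of_forall_apply_eq {α β : Type*} [Finite α]
    {f : Equiv.Perm α} {g : α → β} (hg : ∀ x, g (f x) = g x) {x y : α} (h : f.SameCycle x y) :
    g x = g y := by
  obtain ⟨n, -, rfl⟩ := h.exists_pow_eq'
  simpa [Equiv.Perm.coe_pow] using ((show Function.Semiconj g f id from hg).iterate_right n x).symm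

theorem Fin.eq_neg_add_of_ne {a b c : Fin 3} (hab : a ≠ b) (hca : c ≠ a) (hcb : c ≠ b) :
    c = -(a + b) := by
  revert a b c; decide

theorem Fin.ne_neg_add_of_ne {a b : Fin 3} (h : b ≠ a) : a ≠ -(a + b) := by
  revert a b; decide

namespace Orth.PlaneGraph

variable {M : PlaneGraph} {col : M.D → Fin 3}

/-- By `Fin.eq_neg_add_of_ne`, `-(a + b)` is the color other than the two distinct colors `a`, `b`
seen at the vertex of `d`. -/
def missingColor (col : M.D → Fin 3) (d : M.D) : Fin 3 := -(col d + col (M.σ d))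

namespace IsRainbow

theorem missingColor_σ (hrb : M.IsRainbow col) (d : M.D) :
    missingColor col (M.σ d) = missingColor col d := by
  rw [missingColor, missingColor, hrb.alt_per, add_comm]

theorem missingColor_eq_of_vertexOf_eq (hrb : M.IsRainbow col) {d d' : M.D}
    (h : M.vertexOf d = M.vertexOf d') : missingColor col d = missingColor col d' :=
  have := M.fin
  (Quotient.exact h : M.σ.SameCycle d d').apply_eq_of_forall_apply_eq hrb.missingColor_σ

theorem missingColor_α_ne (hrb : M.IsRainbow col) (d : M.D) :
    missingColor col (M.α d) ≠ missingColor col d := by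
  simpa only [missingColor, hrb.edge_consistent, ne_eq, neg_inj, add_right_inj]
    using (hrb.adj_pairs d).symm

theorem col_ne_missingColor (hrb : M.IsRainbow col) (d : M.D) : col d ≠ missingColor col d :=
  Fin.ne_neg_add_of_ne (hrb.alt_ne d)

theorem col_eq_neg_missingColor_add (hrb : M.IsRainbow col) (d : M.D) :
    col d = -(missingColor col d + missingColor col (M.α d)) :=
  Fin.eq_neg_add_of_ne (hrb.missingColor_α_ne d).symm (hrb.col_ne_missingColor d)
    (hrb.edge_consistent d ▸ hrb.col_ne_missingColor (M.α d))

end IsRainbow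

end Orth.PlaneGraph

theorem stmt13_general (M : Orth.PlaneGraph)
    (col : M.D → Fin 3) (hrb : M.IsRainbow col)
    (d₀ d₁ d₂ : M.D)
    (h01 : M.vertexOf (M.α d₀) = M.vertexOf d₁)
    (h12 : M.vertexOf (M.α d₁) = M.vertexOf d₂)
    (h20 : M.vertexOf (M.α d₂) = M.vertexOf d₀) :
    col d₀ ≠ col d₁ ∧ col d₁ ≠ col d₂ ∧ col d₀ ≠ col d₂ := by
  have c₀ := hrb.col_eq_neg_missingColor_add d₀
  have c₁ := hrb.col_eq_neg_missingColor_add d₁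
  have c₂ := hrb.col_eq_neg_missingColor_add d₂
  have n₀ := hrb.missingColor_α_ne d₀
  have n₁ := hrb.missingColor_α_ne d₁
  have n₂ := hrb.missingColor_α_ne d₂
  rw [hrb.missingColor_eq_of_vertexOf_eq h01] at c₀ n₀
  rw [hrb.missingColor_eq_of_vertexOf_eq h12] at c₁ n₁
  rw [hrb.missingColor_eq_of_vertexOf_eq h20] at c₂ n₂
  rw [c₀, c₁, c₂]
  refine ⟨fun h => n₂ ?_, fun h => n₀ ?_, fun h => n₁ ?_⟩ <;> grind

/-- Let Δ be an Eulerian triangulation with a rainbow partition of its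
edges into three colors, and let δ be a separating triangle of Δ (a 3-cycle that is not
a face). Then the three edges of δ have three distinct colors. -/
theorem stmt13 (M : Orth.PlaneGraph) (hs : M.Simple) (hk : 4 ≤ Nat.card M.Vset)
    (htri : ∀ f : M.Fc, M.faceLen f = 3)
    (heven : ∀ v : M.Vset, Even (M.degree v))
    (col : M.D → Fin 3) (hrb : M.IsRainbow col)
    (d₀ d₁ d₂ : M.D)
    (h01 : M.vertexOf (M.α d₀) = M.vertexOf d₁)
    (h12 : M.vertexOf (M.α d₁) = M.vertexOf d₂)
    (h20 : M.vertexOf (M.α d₂) = M.vertexOf d₀)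
    (hdist : [M.vertexOf d₀, M.vertexOf d₁, M.vertexOf d₂].Nodup)
    (hsep : ¬ ∃ f : M.Fc,
      M.eOnFace (M.edgeOf d₀) f ∧ M.eOnFace (M.edgeOf d₁) f ∧ M.eOnFace (M.edgeOf d₂) f) :
    col d₀ ≠ col d₁ ∧ col d₁ ≠ col d₂ ∧ col d₀ ≠ col d₂ :=
  stmt13_general M col hrb d₀ d₁ d₂ h01 h12 h20
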